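/- arXiv:1909.09658 — 4 statements merged into one kernel-verified Lean document; each statement's English description precedes it below -/
import Mathlib

section
/- For every finite poset P, every v ∈ P, and every positive labeling g of P, the birational antichain toggle τ_v is an involution: τ_v(τ_v(g)) = g. -/
/-!
Birational (commutative) antichain/order rowmotion on a finite poset `P`, with labels in `ℝ`
and positive labelings, following Joseph–Roby, "Birational and noncommutative lifts of
antichain toggling and rowmotion".
-/

open Finset

attribute [local instance] Classical.propDecidable

variable {P : Type*} [Fintype P] [PartialOrder P]

/-- `c` is a saturated chain in `P`: consecutive entries are covers. -/
def SatChain {P : Type*} [PartialOrder P] {k : ℕ} (c : Fin (k + 1) → P) : Prop :=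
  ∀ i : Fin k, c i.castSucc ⋖ c i.succ

/-- `c` is a maximal chain of `P`: a saturated chain from a minimal element to a maximal
element of `P` (equivalently, the restriction to `P` of a maximal chain
`0̂ ⋖ y₁ ⋖ ⋯ ⋖ y_k ⋖ 1̂` of `P̂`). -/
def MaxChain {P : Type*} [PartialOrder P] {k : ℕ} (c : Fin (k + 1) → P) : Prop :=
  SatChain c ∧ IsMin (c 0) ∧ IsMax (c (Fin.last k))

/-- `Υ_v(g)`: the sum over all maximal chains `(y₁, …, y_k)` of `P` through `v` of the
products `g(y₁)⋯g(y_k)` of the labels along the chain. -/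
noncomputable def Upsilon (g : P → ℝ) (v : P) : ℝ :=
  ∑ k ∈ range (Fintype.card P),
    ∑ c ∈ univ.filter (fun c : Fin (k + 1) → P => MaxChain c ∧ ∃ j, c j = v),
      (List.ofFn (g ∘ c)).prod

/-- The birational antichain toggle `τ_v`: it replaces the label at `v` by `C / Υ_v(g)` and
fixes all other labels. -/
noncomputable def atog (C : ℝ) (v : P) (g : P → ℝ) : P → ℝ :=
  fun x => if x = v then C / Upsilon g v else g x

/-- `∑_{y ∈ P̂, y ⋖ x} f(y)`, with the convention `f(0̂) = 1` (the unique lower cover in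
`P̂` of a minimal element of `P` is `0̂`). -/
noncomputable def lowSum (f : P → ℝ) (x : P) : ℝ :=
  (if IsMin x then 1 else 0) + ∑ y ∈ univ.filter (fun y => y ⋖ x), f y

/-- `∑_{y ∈ P̂, y ⋗ x} 1/f(y)`, with the convention `f(1̂) = C`. -/
noncomputable def upInvSum (C : ℝ) (f : P → ℝ) (x : P) : ℝ :=
  (if IsMax x then 1 / C else 0) + ∑ y ∈ univ.filter (fun y => x ⋖ y), 1 / f y

/-- The birational order toggle `T_v`: it replaces the label at `v` by
`(∑_{y ∈ P̂, y ⋖ v} f(y)) / (f(v) · ∑_{y ∈ P̂, y ⋗ v} 1/f(y))` (with `f(0̂) = 1`,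
`f(1̂) = C`) and fixes all other labels. -/
noncomputable def otog (C : ℝ) (v : P) (f : P → ℝ) : P → ℝ :=
  fun x => if x = v then lowSum f v / (f v * upInvSum C f v) else f x

/-- The birational complement map `Θ`: `(Θf)(x) = C / f(x)`. -/
noncomputable def thetaMap (C : ℝ) (f : P → ℝ) : P → ℝ := fun x => C / f x

/-- The birational down transfer `∇`: `(∇f)(x) = f(x) / ∑_{y ∈ P̂, y ⋖ x} f(y)` with
`f(0̂) = 1`. -/
noncomputable def nablaMap (f : P → ℝ) : P → ℝ := fun x => f x / lowSum f x

/-- The birational inverse up transfer `Δ⁻¹`: `(Δ⁻¹f)(x)` is the sum, over all saturated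
chains `x = y₁ ⋖ y₂ ⋖ ⋯ ⋖ y_k ⋖ 1̂` in `P̂` (i.e. saturated chains of `P` starting at `x`
and ending at a maximal element of `P`), of `f(y₁)f(y₂)⋯f(y_k)`. -/
noncomputable def deltaInvMap (f : P → ℝ) : P → ℝ := fun x =>
  ∑ k ∈ range (Fintype.card P),
    ∑ c ∈ univ.filter (fun c : Fin (k + 1) → P =>
        SatChain c ∧ c 0 = x ∧ IsMax (c (Fin.last k))),
      (List.ofFn (f ∘ c)).prod

/-- `l` is a linear extension of `P`: it lists every element of `P` exactly once, and
`l[i] < l[j]` in `P` implies `i < j`. -/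
def IsLinearExtension {P : Type*} [PartialOrder P] (l : List P) : Prop :=
  l.Nodup ∧ (∀ x : P, x ∈ l) ∧
    ∀ (i j : ℕ) (hi : i < l.length) (hj : j < l.length), l[i]'hi < l[j]'hj → i < j

/-- `l` is a linear extension of the subposet `A` of `P`. -/
def IsLinearExtensionOn {P : Type*} [PartialOrder P] (A : Set P) (l : List P) : Prop :=
  l.Nodup ∧ (∀ x : P, x ∈ l ↔ x ∈ A) ∧
    ∀ (i j : ℕ) (hi : i < l.length) (hj : j < l.length), l[i]'hi < l[j]'hj → i < j

/-- Apply the antichain toggles `τ` along the list `l`, first element of `l` first; for a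
linear extension `l = (x₁,…,xₙ)` this is `τ_{xₙ} ∘ ⋯ ∘ τ_{x₂} ∘ τ_{x₁}`, i.e. birational
antichain rowmotion `BAR`. -/
noncomputable def applyATogs (C : ℝ) (l : List P) (g : P → ℝ) : P → ℝ :=
  l.foldl (fun h v => atog C v h) g

/-- Apply the order toggles `T` along the list `l`, first element of `l` first. -/
noncomputable def applyOTogs (C : ℝ) (l : List P) (f : P → ℝ) : P → ℝ :=
  l.foldl (fun h v => otog C v h) f

/-- `rk` is a rank function exhibiting `P` as a graded poset of rank `r`: minimal elements
have rank `0`, ranks increase by `1` along covers, and maximal elements have rank `r`. -/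
def IsRankFunction {P : Type*} [PartialOrder P] (rk : P → ℕ) (r : ℕ) : Prop :=
  (∀ x : P, IsMin x → rk x = 0) ∧ (∀ x y : P, x ⋖ y → rk y = rk x + 1) ∧
    (∀ x : P, IsMax x → rk x = r)

section Aux

/-- A saturated chain is strictly monotone. -/
lemma SatChain.strictMono {k : ℕ} {c : Fin (k + 1) → P} (hc : SatChain c) :
    StrictMono c :=
  Fin.strictMono_iff_lt_succ.2 fun i => (hc i).lt

/-- There is a saturated chain from `v` up to a maximal element. -/
lemma exists_up_chain (v : P) :
    ∃ (k : ℕ) (c : Fin (k + 1) → P), SatChain c ∧ c 0 = v ∧ IsMax (c (Fin.last k)) := by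
  refine WellFounded.induction (C := fun v : P => ∃ (k : ℕ) (c : Fin (k + 1) → P),
      SatChain c ∧ c 0 = v ∧ IsMax (c (Fin.last k)))
    (Finite.to_wellFoundedGT (α := P)).wf v ?_
  intro v ih
  by_cases hmax : IsMax v
  · exact ⟨0, fun _ => v, fun i => i.elim0, rfl, hmax⟩
  · obtain ⟨w, hw⟩ := exists_covBy_of_wellFoundedLT hmax
    obtain ⟨k, c, hc, hc0, hcl⟩ := ih w hw.lt
    refine ⟨k + 1, Fin.cons v c, ?_, by simp, ?_⟩
    · intro i
      induction i using Fin.cases with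
      | zero => simpa [hc0] using hw
      | succ j =>
        have h1 : (Fin.castSucc j.succ) = (Fin.castSucc j).succ := (Fin.succ_castSucc j).symm
        rw [h1, Fin.cons_succ, Fin.cons_succ]
        exact hc j
    · have h2 : Fin.last (k + 1) = (Fin.last k).succ := (Fin.succ_last k).symm
      rw [h2, Fin.cons_succ]
      exact hcl

/-- There is a saturated chain from a minimal element up to `v`. -/
lemma exists_down_chain (v : P) :
    ∃ (k : ℕ) (c : Fin (k + 1) → P), SatChain c ∧ IsMin (c 0) ∧ c (Fin.last k) = v := by
  refine WellFounded.induction (C := fun v : P => ∃ (k : ℕ) (c : Fin (k + 1) → P),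
      SatChain c ∧ IsMin (c 0) ∧ c (Fin.last k) = v)
    (Finite.to_wellFoundedLT (α := P)).wf v ?_
  intro v ih
  by_cases hmin : IsMin v
  · exact ⟨0, fun _ => v, fun i => i.elim0, hmin, rfl⟩
  · obtain ⟨w, hw⟩ := exists_covBy_of_wellFoundedGT hmin
    obtain ⟨k, c, hc, hc0, hcl⟩ := ih w hw.lt
    refine ⟨k + 1, Fin.snoc c v, ?_, ?_, by simp⟩
    · intro i
      induction i using Fin.lastCases with
      | last =>
        have h1 : (Fin.last k).succ = Fin.last (k + 1) := Fin.succ_last k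
        rw [h1, Fin.snoc_last, Fin.snoc_castSucc, hcl]
        exact hw
      | cast j =>
        have h1 : (Fin.castSucc j).succ = Fin.castSucc j.succ := Fin.succ_castSucc j
        rw [h1, Fin.snoc_castSucc, Fin.snoc_castSucc]
        exact hc j
    · have h0 : (0 : Fin (k + 2)) = Fin.castSucc 0 := by simp
      rw [h0, Fin.snoc_castSucc]
      exact hc0

/-- There is a maximal chain through `v` of bounded length. -/
lemma exists_max_chain_through (v : P) :
    ∃ k ∈ range (Fintype.card P),
      ∃ (c : Fin (k + 1) → P), MaxChain c ∧ ∃ j, c j = v := by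
  obtain ⟨m, c₁, hc₁, hmin, hc₁l⟩ := exists_down_chain v
  obtain ⟨n, c₂, hc₂, hc₂0, hmax⟩ := exists_up_chain v
  set c : Fin (m + n + 1) → P := fun i => if h : (i : ℕ) < m + 1 then c₁ ⟨i, h⟩
    else c₂ ⟨(i : ℕ) - m, by omega⟩ with hcdef
  have hbridge : ∀ (i : Fin (m + n + 1)), m ≤ (i : ℕ) →
      c i = c₂ ⟨(i : ℕ) - m, by omega⟩ := by
    intro i hi
    rcases eq_or_lt_of_le hi with h | h
    · have h1 : ((i : ℕ) : ℕ) < m + 1 := by omega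
      have h2 : (⟨(i : ℕ), h1⟩ : Fin (m + 1)) = Fin.last m := by
        ext; simp [← h]
      have h3 : (⟨(i : ℕ) - m, by omega⟩ : Fin (n + 1)) = 0 := by
        ext; simp; omega
      simp only [hcdef, dif_pos h1, h2, hc₁l, h3, hc₂0]
    · simp only [hcdef, dif_neg (by omega : ¬ ((i : ℕ) < m + 1))]
  have hsat : SatChain c := by
    intro i
    have hcs : ((i.castSucc : Fin (m + n + 1)) : ℕ) = (i : ℕ) := rfl
    have hss : ((i.succ : Fin (m + n + 1)) : ℕ) = (i : ℕ) + 1 := rfl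
    by_cases hi : (i : ℕ) < m
    · have h1 : ((i.castSucc : Fin (m+n+1)) : ℕ) < m + 1 := by omega
      have h2 : ((i.succ : Fin (m+n+1)) : ℕ) < m + 1 := by omega
      simp only [hcdef, dif_pos h1, dif_pos h2]
      have := hc₁ ⟨(i : ℕ), hi⟩
      have e1 : (⟨((i.castSucc : Fin (m+n+1)) : ℕ), h1⟩ : Fin (m + 1))
          = Fin.castSucc ⟨(i : ℕ), hi⟩ := by ext; simp [hcs]
      have e2 : (⟨((i.succ : Fin (m+n+1)) : ℕ), h2⟩ : Fin (m + 1))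
          = Fin.succ ⟨(i : ℕ), hi⟩ := by ext; simp [hss]
      rw [e1, e2]; exact this
    · push_neg at hi
      have hilt : (i : ℕ) < m + n := i.isLt
      rw [hbridge i.castSucc (by omega), hbridge i.succ (by omega)]
      have := hc₂ ⟨(i : ℕ) - m, by omega⟩
      have e1 : (⟨((i.castSucc : Fin (m+n+1)) : ℕ) - m, by omega⟩ : Fin (n + 1))
          = Fin.castSucc ⟨(i : ℕ) - m, by omega⟩ := by ext; simp [hcs]
      have e2 : (⟨((i.succ : Fin (m+n+1)) : ℕ) - m, by omega⟩ : Fin (n + 1))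
          = Fin.succ ⟨(i : ℕ) - m, by omega⟩ := by ext; simp [hss]; omega
      rw [e1, e2]; exact this
  have hinj : Function.Injective c := hsat.strictMono.injective
  have hcard : m + n + 1 ≤ Fintype.card P := by
    simpa using Fintype.card_le_of_injective c hinj
  refine ⟨m + n, by rw [mem_range]; omega, c, ⟨hsat, ?_, ?_⟩, ⟨⟨m, by omega⟩, ?_⟩⟩
  · have h1 : ((0 : Fin (m + n + 1)) : ℕ) < m + 1 := by simp
    have e : c 0 = c₁ 0 := by
      simp only [hcdef, dif_pos h1]
      congr 1
    rw [e]; exact hmin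
  · rw [hbridge (Fin.last (m + n)) (by simp [Fin.last])]
    have e : (⟨((Fin.last (m + n) : Fin (m+n+1)) : ℕ) - m, by omega⟩ : Fin (n + 1))
        = Fin.last n := by ext; simp [Fin.last]
    rw [e]; exact hmax
  · have h1 : ((⟨m, by omega⟩ : Fin (m + n + 1)) : ℕ) < m + 1 := by simp
    have e : c ⟨m, by omega⟩ = c₁ (Fin.last m) := by
      simp only [hcdef, dif_pos h1]
      congr 1
    rw [e, hc₁l]

/-- `Υ_v(g)` is positive for a positive labeling. -/
lemma upsilon_pos (g : P → ℝ) (hg : ∀ x, 0 < g x) (v : P) : 0 < Upsilon g v := by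
  obtain ⟨k, hk, c, hc, hj⟩ := exists_max_chain_through v
  have hterm : ∀ (k : ℕ) (c : Fin (k + 1) → P), 0 < (List.ofFn (g ∘ c)).prod := by
    intro k c
    rw [List.prod_ofFn]
    exact Finset.prod_pos fun i _ => hg _
  refine Finset.sum_pos' (fun k _ => Finset.sum_nonneg fun c _ => (hterm k c).le) ⟨k, hk, ?_⟩
  refine Finset.sum_pos' (fun c _ => (hterm k c).le) ⟨c, ?_, hterm k c⟩
  simp [hc, hj]

/-- If `h` agrees with `g` away from `v`, then `Υ_v(h) · g(v) = h(v) · Υ_v(g)`. -/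
lemma upsilon_ratio (g h : P → ℝ) (v : P) (hgh : ∀ x, x ≠ v → h x = g x) :
    Upsilon h v * g v = h v * Upsilon g v := by
  unfold Upsilon
  rw [Finset.sum_mul, Finset.mul_sum]
  refine Finset.sum_congr rfl fun k _ => ?_
  rw [Finset.sum_mul, Finset.mul_sum]
  refine Finset.sum_congr rfl fun c hcmem => ?_
  simp only [mem_filter, mem_univ, true_and] at hcmem
  obtain ⟨hmc, j, hj⟩ := hcmem
  have hinj : Function.Injective c := hmc.1.strictMono.injective
  rw [List.prod_ofFn, List.prod_ofFn]
  rw [← Finset.mul_prod_erase univ (h ∘ c) (mem_univ j),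
      ← Finset.mul_prod_erase univ (g ∘ c) (mem_univ j)]
  have herase : ∏ i ∈ univ.erase j, (h ∘ c) i = ∏ i ∈ univ.erase j, (g ∘ c) i := by
    refine Finset.prod_congr rfl fun i hi => ?_
    have hij : i ≠ j := (Finset.mem_erase.mp hi).1
    have : c i ≠ v := fun hciv => hij (hinj (hciv.trans hj.symm))
    simp [Function.comp, hgh _ this]
  rw [herase]
  simp only [Function.comp, hj]
  ring

end Aux

/-- For every finite poset `P`, every `v ∈ P` and every positive
labeling `g` of `P`, the birational antichain toggle `τ_v` is an involution:
`τ_v(τ_v(g)) = g`. -/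

theorem atog_involution (C : ℝ) (hC : 0 < C) (v : P)
    (g : P → ℝ) (hg : ∀ x, 0 < g x) :
    atog C v (atog C v g) = g := by
  have hU : 0 < Upsilon g v := upsilon_pos g hg v
  set g' := atog C v g with hg'def
  have hg'v : g' v = C / Upsilon g v := by simp [hg'def, atog]
  have hg'x : ∀ x, x ≠ v → g' x = g x := fun x hx => by simp [hg'def, atog, hx]
  have hratio : Upsilon g' v * g v = g' v * Upsilon g v := upsilon_ratio g g' v hg'x
  have hU' : Upsilon g' v = C / g v := by
    have h1 : Upsilon g' v * g v = C := by
      rw [hratio, hg'v, div_mul_cancel₀ _ hU.ne']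
    rw [eq_div_iff (hg v).ne']
    exact h1
  funext x
  by_cases hx : x = v
  · rw [hx]
    show (if v = v then C / Upsilon g' v else g' v) = g v
    rw [if_pos rfl, hU']
    rw [div_div_eq_mul_div, mul_comm, mul_div_assoc, div_self hC.ne', mul_one]
  · simp [atog, hx, hg'x x hx]
end

section
/- Let P be a finite poset and u, v ∈ P incomparable elements (neither u ≤ v nor v ≤ u). Then the birational antichain toggles at u and v commute: τ_u(τ_v(g)) = τ_v(τ_u(g)) for every positive labeling g of P. -/
/-!
Birational (commutative) antichain/order rowmotion on a finite poset `P`, with labels in `ℝ`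
and positive labelings, following Joseph–Roby, "Birational and noncommutative lifts of
antichain toggling and rowmotion".
-/

open Finset

attribute [local instance] Classical.propDecidable

variable {P : Type*} [Fintype P] [PartialOrder P]

private lemma satChain_comparable {k : ℕ} {c : Fin (k + 1) → P} (h : SatChain c)
    (i j : Fin (k + 1)) : c i ≤ c j ∨ c j ≤ c i := by
  have hm : StrictMono c := Fin.strictMono_iff_lt_succ.mpr fun i => (h i).lt
  rcases le_total i j with hij | hij
  · exact Or.inl (hm.monotone hij)
  · exact Or.inr (hm.monotone hij)

private lemma upsilon_atog (C : ℝ) (u v : P) (huv : ¬ u ≤ v) (hvu : ¬ v ≤ u)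
    (g : P → ℝ) : Upsilon (atog C u g) v = Upsilon g v := by
  unfold Upsilon
  refine Finset.sum_congr rfl fun k _ => Finset.sum_congr rfl fun c hc => ?_
  simp only [Finset.mem_filter] at hc
  obtain ⟨-, ⟨hsat, -, -⟩, j, hj⟩ := hc
  have hfun : (atog C u g) ∘ c = g ∘ c := by
    funext i
    have hne : c i ≠ u := by
      intro h
      rcases satChain_comparable hsat i j with h1 | h1
      · rw [h, hj] at h1; exact huv h1
      · rw [h, hj] at h1; exact hvu h1
    simp [atog, hne]
  rw [hfun]

/-- If `u, v ∈ P` are incomparable (neither `u ≤ v` nor `v ≤ u`), then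
the birational antichain toggles at `u` and at `v` commute on positive labelings. -/
theorem atog_commute_of_incomparable (C : ℝ) (hC : 0 < C) (u v : P)
    (huv : ¬ u ≤ v) (hvu : ¬ v ≤ u)
    (g : P → ℝ) (hg : ∀ x, 0 < g x) :
    atog C u (atog C v g) = atog C v (atog C u g) := by
  have hne : u ≠ v := fun h => huv (le_of_eq h)
  funext x
  by_cases hxu : x = u
  · subst hxu
    simp only [atog, if_pos rfl, if_neg hne, upsilon_atog C v x hvu huv g]
  · by_cases hxv : x = v
    · subst hxv
      simp only [atog, if_pos rfl, if_neg (Ne.symm hne), upsilon_atog C u x huv hvu g]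
    · simp [atog, hxu, hxv]
end

section
/- Let P be a finite poset. Birational antichain rowmotion and birational order rowmotion are intertwined by the down-transfer map: ∇ ∘ BOR = BAR ∘ ∇ as maps on positive labelings of P. -/
/-!
Birational (commutative) antichain/order rowmotion on a finite poset `P`, with labels in `ℝ`
and positive labelings, following Joseph–Roby, "Birational and noncommutative lifts of
antichain toggling and rowmotion".
-/

open Finset

attribute [local instance] Classical.propDecidable

variable {P : Type*} [Fintype P] [PartialOrder P]

/-!
Put `g = ∇f` and `F = Θ(Δ⁻¹g) = C / Δ⁻¹g`, where `Δ⁻¹g(x)` sums `g` over chains from `x` up to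
`1̂` and satisfies `Δ⁻¹g(x) = g(x)·([x maximal] + ∑_{x⋖y} Δ⁻¹g(y))`.

Toggling `f` from the top down, when `T_v` acts the upper covers of `v` already carry `F` and
everything weakly below `v` still carries `f`; by the recursion the new label is `F(v)`, so
`BOR f = F`.

Toggling `g` from the bottom up, when `τ_v` acts everything below `v` carries `∇F` and the rest
still carries `g`. Cutting each maximal chain at `v` gives `Υ_v · g(v) = ∇⁻¹(v) · Δ⁻¹(v)`, where
`∇⁻¹` sums over chains from `0̂` up to `v` and inverts `∇`. Hence `Υ_v = (∑_{y⋖v} F y)·Δ⁻¹g(v)`,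
the new label is `∇F(v)`, and `BAR g = ∇F = ∇(BOR f)`.
-/

noncomputable def boundedLists (α : Type*) [Fintype α] : Finset (List α) :=
  (range (Fintype.card α)).biUnion fun k => univ.image (List.ofFn : (Fin (k + 1) → α) → List α)

theorem mem_boundedLists {α : Type*} [Fintype α] {L : List α} :
    L ∈ boundedLists α ↔ L ≠ [] ∧ L.length ≤ Fintype.card α := by
  simp only [boundedLists, mem_biUnion, mem_range, mem_image, mem_univ, true_and]
  constructor
  · rintro ⟨k, hk, c, rfl⟩
    exact ⟨by simp [List.ofFn_succ], by simp only [List.length_ofFn]; omega⟩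
  · rintro ⟨hne, hlen⟩
    obtain ⟨k, hk⟩ := Nat.exists_eq_add_one_of_ne_zero (List.length_pos_iff.mpr hne).ne'
    exact ⟨k, by omega, fun i => L[i.val],
      List.ext_getElem (by simp [hk]) fun _ _ _ => by simp only [List.getElem_ofFn]⟩

theorem sum_ofFn_eq_sum_boundedLists {α : Type*} [Fintype α] (Q : List α → Prop)
    [DecidablePred Q] (w : List α → ℝ) :
    ∑ k ∈ range (Fintype.card α),
      ∑ c ∈ univ.filter (fun c : Fin (k + 1) → α => Q (List.ofFn c)), w (List.ofFn c)
      = ∑ L ∈ (boundedLists α).filter Q, w L := by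
  rw [sum_filter, boundedLists, sum_biUnion]
  · refine sum_congr rfl fun k _ => ?_
    rw [sum_image fun _ _ _ _ h => List.ofFn_injective h, sum_filter]
  · intro a _ b _ hab
    simp only [Function.onFun, disjoint_left, mem_image, mem_univ, true_and]
    rintro _ ⟨c, rfl⟩ ⟨d, hd⟩
    exact hab (by simpa using (congrArg List.length hd).symm)

theorem getLast?_ofFn_succ {α : Type*} {k : ℕ} (c : Fin (k + 1) → α) :
    (List.ofFn c).getLast? = some (c (Fin.last k)) := by
  rw [List.ofFn_succ', List.concat_eq_append, List.getLast?_concat]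

theorem head?_ofFn_succ {α : Type*} {k : ℕ} (c : Fin (k + 1) → α) :
    (List.ofFn c).head? = some (c 0) := by
  rw [List.ofFn_succ, List.head?_cons]

theorem satChain_iff_isChain_ofFn {α : Type*} [PartialOrder α] {k : ℕ} (c : Fin (k + 1) → α) :
    SatChain c ↔ (List.ofFn c).IsChain (· ⋖ ·) := by
  simp only [SatChain, List.isChain_iff_getElem, List.length_ofFn, List.getElem_ofFn]
  exact ⟨fun h i hi => h ⟨i, by omega⟩, fun h i => h i (by omega)⟩

theorem List.IsChain.nodup_of_covBy {α : Type*} [PartialOrder α] {L : List α}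
    (hc : L.IsChain (· ⋖ ·)) : L.Nodup :=
  (hc.imp fun _ _ h => h.lt).pairwise.imp ne_of_lt

theorem mem_boundedLists_of_isChain {L : List P} (hc : L.IsChain (· ⋖ ·)) (hne : L ≠ []) :
    L ∈ boundedLists P :=
  mem_boundedLists.mpr ⟨hne, hc.nodup_of_covBy.length_le_card⟩

noncomputable def chainsToMax (x : P) : Finset (List P) :=
  (boundedLists P).filter fun L =>
    L.IsChain (· ⋖ ·) ∧ L.head? = some x ∧ ∀ z ∈ L.getLast?, IsMax z

theorem mem_chainsToMax {x : P} {L : List P} :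
    L ∈ chainsToMax x ↔ L.IsChain (· ⋖ ·) ∧ L.head? = some x ∧ ∀ z ∈ L.getLast?, IsMax z := by
  refine mem_filter.trans ⟨And.right, fun h => ⟨mem_boundedLists_of_isChain h.1 ?_, h⟩⟩
  rintro rfl
  simp at h

theorem deltaInvMap_eq_sum_chainsToMax (p : P → ℝ) (x : P) :
    deltaInvMap p x = ∑ L ∈ chainsToMax x, (L.map p).prod := by
  simp only [deltaInvMap, ← List.map_ofFn]
  rw [chainsToMax, ← sum_ofFn_eq_sum_boundedLists]
  refine sum_congr rfl fun k _ => sum_congr (filter_congr fun c _ => ?_) fun _ _ => rfl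
  rw [satChain_iff_isChain_ofFn, getLast?_ofFn_succ, List.ofFn_succ]
  simp

theorem chainsToMax_eq (x : P) :
    chainsToMax x = (if IsMax x then {[x]} else ∅) ∪
      (univ.filter (x ⋖ ·)).biUnion fun y => (chainsToMax y).image (x :: ·) := by
  ext L
  simp only [mem_union, mem_biUnion, mem_filter, mem_univ, true_and, mem_image, mem_chainsToMax]
  constructor
  · rintro ⟨hc, hh, hl⟩
    obtain ⟨t, rfl⟩ := List.head?_eq_some_iff.mp hh
    cases t with
    | nil => left; simp_all
    | cons y t =>
      rw [List.isChain_cons_cons] at hc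
      rw [List.getLast?_cons_cons] at hl
      exact Or.inr ⟨y, hc.1, y :: t, ⟨hc.2, rfl, hl⟩, rfl⟩
  · rintro (h | ⟨y, hxy, t, ⟨hc, hh, hl⟩, rfl⟩)
    · split_ifs at h with hx <;> simp_all
    · obtain ⟨t, rfl⟩ := List.head?_eq_some_iff.mp hh
      exact ⟨List.isChain_cons_cons.mpr ⟨hxy, hc⟩, rfl, by rwa [List.getLast?_cons_cons]⟩

theorem deltaInvMap_eq_mul (p : P → ℝ) (x : P) :
    deltaInvMap p x =
      p x * ((if IsMax x then 1 else 0) + ∑ y ∈ univ.filter (x ⋖ ·), deltaInvMap p y) := by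
  have hne : ∀ {y : P} {t}, t ∈ chainsToMax y → t ≠ [] := fun ht h => by
    simp [h, mem_chainsToMax] at ht
  have hdisj : Disjoint (if IsMax x then {[x]} else ∅)
      ((univ.filter (x ⋖ ·)).biUnion fun y => (chainsToMax y).image (x :: ·)) := by
    split_ifs
    · simp only [disjoint_singleton_left, mem_biUnion, mem_image, not_exists, not_and]
      rintro y - t ht ⟨⟩
      exact hne ht rfl
    · exact disjoint_empty_left _
  have hpair : (univ.filter (x ⋖ ·) : Set P).PairwiseDisjoint
      fun y => (chainsToMax y).image (x :: ·) := by
    intro y₁ _ y₂ _ hy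
    simp only [Function.onFun, disjoint_left, mem_image, not_exists, not_and]
    rintro _ ⟨t, ht, rfl⟩ s hs hst
    cases List.cons_injective hst
    exact hy (Option.some_injective _ <|
      (mem_chainsToMax.mp ht).2.1.symm.trans (mem_chainsToMax.mp hs).2.1)
  simp only [deltaInvMap_eq_sum_chainsToMax]
  rw [chainsToMax_eq x, sum_union hdisj, sum_biUnion hpair, mul_add, mul_sum]
  congr 1
  · split_ifs <;> simp
  · refine sum_congr rfl fun y _ => ?_
    rw [sum_image fun _ _ _ _ h => List.cons_injective h, mul_sum]
    simp

theorem deltaInvMap_congr {p q : P → ℝ} {x : P} (h : ∀ y, x ≤ y → p y = q y) :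
    deltaInvMap p x = deltaInvMap q x := by
  induction x using WellFoundedGT.induction with
  | _ x ih =>
    rw [deltaInvMap_eq_mul, deltaInvMap_eq_mul q, h x le_rfl]
    refine congrArg _ (congrArg _ (sum_congr rfl fun y hy => ?_))
    have hxy := (mem_filter.mp hy).2
    exact ih y hxy.lt fun z hz => h z (hxy.le.trans hz)

theorem deltaInvMap_pos {p : P → ℝ} (hp : ∀ x, 0 < p x) (x : P) : 0 < deltaInvMap p x := by
  induction x using WellFoundedGT.induction with
  | _ x ih =>
    have hsum : ∀ y ∈ univ.filter (x ⋖ ·), 0 < deltaInvMap p y :=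
      fun y hy => ih y (mem_filter.mp hy).2.lt
    rw [deltaInvMap_eq_mul]
    refine mul_pos (hp x) ?_
    by_cases hx : IsMax x
    · rw [if_pos hx]
      exact add_pos_of_pos_of_nonneg one_pos (sum_nonneg fun y hy => (hsum y hy).le)
    · obtain ⟨y, hxy, -⟩ := exists_covBy_le_of_lt (not_isMax_iff.mp hx).choose_spec
      rw [if_neg hx, zero_add]
      exact sum_pos hsum ⟨y, mem_filter.mpr ⟨mem_univ y, hxy⟩⟩

theorem lowSum_congr {f g : P → ℝ} {x : P} (h : ∀ y, y ⋖ x → f y = g y) :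
    lowSum f x = lowSum g x :=
  congrArg _ (sum_congr rfl fun y hy => h y (mem_filter.mp hy).2)

theorem lowSum_pos {f : P → ℝ} (hf : ∀ x, 0 < f x) (x : P) : 0 < lowSum f x := by
  by_cases hx : IsMin x
  · rw [lowSum, if_pos hx]
    exact add_pos_of_pos_of_nonneg one_pos (sum_nonneg fun y _ => (hf y).le)
  · obtain ⟨y, -, hyx⟩ := exists_le_covBy_of_lt (not_isMin_iff.mp hx).choose_spec
    rw [lowSum, if_neg hx, zero_add]
    exact sum_pos (fun y _ => hf y) ⟨y, mem_filter.mpr ⟨mem_univ y, hyx⟩⟩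

theorem nablaMap_pos {f : P → ℝ} (hf : ∀ x, 0 < f x) (x : P) : 0 < nablaMap f x :=
  div_pos (hf x) (lowSum_pos hf x)

/-- `∇⁻¹`: the sum over the saturated chains `0̂ ⋖ y₁ ⋖ ⋯ ⋖ y_k = x` of `p(y₁)⋯p(y_k)`,
obtained as `Δ⁻¹` of the dual poset. -/
noncomputable def nablaInvMap (p : P → ℝ) (x : P) : ℝ :=
  deltaInvMap (p ∘ OrderDual.ofDual) (OrderDual.toDual x)

theorem nablaInvMap_eq_mul_lowSum (p : P → ℝ) (x : P) :
    nablaInvMap p x = p x * lowSum (nablaInvMap p) x := by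
  rw [nablaInvMap, deltaInvMap_eq_mul, lowSum, isMax_toDual_iff]
  congr 2
  refine sum_equiv OrderDual.ofDual (fun y => ?_) fun y _ => rfl
  simpa using (ofDual_covBy_ofDual_iff (a := y) (b := OrderDual.toDual x)).symm

theorem nablaInvMap_congr {p q : P → ℝ} {x : P} (h : ∀ y, y ≤ x → p y = q y) :
    nablaInvMap p x = nablaInvMap q x :=
  deltaInvMap_congr fun _ hy => h _ hy

theorem nablaInvMap_nablaMap {F : P → ℝ} (hF : ∀ x, 0 < F x) : nablaInvMap (nablaMap F) = F := by
  funext x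
  induction x using WellFoundedLT.induction with
  | _ x ih =>
    rw [nablaInvMap_eq_mul_lowSum, lowSum_congr fun y hy => ih y hy.lt, nablaMap]
    exact div_mul_cancel₀ _ (lowSum_pos hF x).ne'

noncomputable def chainsFromMin (x : P) : Finset (List P) :=
  (boundedLists P).filter fun L =>
    L.IsChain (· ⋖ ·) ∧ L.getLast? = some x ∧ ∀ z ∈ L.head?, IsMin z

theorem mem_chainsFromMin {x : P} {L : List P} :
    L ∈ chainsFromMin x ↔
      L.IsChain (· ⋖ ·) ∧ L.getLast? = some x ∧ ∀ z ∈ L.head?, IsMin z := by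
  refine mem_filter.trans ⟨And.right, fun h => ⟨mem_boundedLists_of_isChain h.1 ?_, h⟩⟩
  rintro rfl
  simp at h

theorem nablaInvMap_eq_sum_chainsFromMin (p : P → ℝ) (x : P) :
    nablaInvMap p x = ∑ L ∈ chainsFromMin x, (L.map p).prod := by
  rw [nablaInvMap, deltaInvMap_eq_sum_chainsToMax]
  refine sum_nbij' (fun L => (L.map OrderDual.ofDual).reverse)
    (fun L => (L.map OrderDual.toDual).reverse) (fun L hL => ?_) (fun L hL => ?_)
    (fun L _ => by simp [List.map_reverse]) (fun L _ => by simp [List.map_reverse])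
    (fun L _ => by simp [List.map_reverse, List.prod_reverse])
  · simpa [mem_chainsToMax, mem_chainsFromMin, List.isChain_reverse, List.isChain_map] using hL
  · simpa [mem_chainsToMax, mem_chainsFromMin, List.isChain_reverse, List.isChain_map] using hL

noncomputable def maxChainsThrough (v : P) : Finset (List P) :=
  (boundedLists P).filter fun L =>
    L.IsChain (· ⋖ ·) ∧ (∀ z ∈ L.head?, IsMin z) ∧ (∀ z ∈ L.getLast?, IsMax z) ∧ v ∈ L

theorem mem_maxChainsThrough {v : P} {L : List P} :
    L ∈ maxChainsThrough v ↔
      L.IsChain (· ⋖ ·) ∧ (∀ z ∈ L.head?, IsMin z) ∧ (∀ z ∈ L.getLast?, IsMax z) ∧ v ∈ L :=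
  mem_filter.trans ⟨And.right, fun h =>
    ⟨mem_boundedLists_of_isChain h.1 (List.ne_nil_of_mem h.2.2.2), h⟩⟩

theorem upsilon_eq_sum_maxChainsThrough (p : P → ℝ) (v : P) :
    Upsilon p v = ∑ L ∈ maxChainsThrough v, (L.map p).prod := by
  simp only [Upsilon, ← List.map_ofFn]
  rw [maxChainsThrough, ← sum_ofFn_eq_sum_boundedLists]
  refine sum_congr rfl fun k _ => sum_congr (filter_congr fun c _ => ?_) fun _ _ => rfl
  rw [MaxChain, satChain_iff_isChain_ofFn, head?_ofFn_succ, getLast?_ofFn_succ, List.mem_ofFn]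
  simp [and_assoc]

theorem append_cons_mem_maxChainsThrough {s t : List P} {v : P} :
    s ++ v :: t ∈ maxChainsThrough v ↔ s ++ [v] ∈ chainsFromMin v ∧ v :: t ∈ chainsToMax v := by
  rw [mem_maxChainsThrough, mem_chainsFromMin, mem_chainsToMax, List.isChain_split]
  simp [and_assoc, and_left_comm]

theorem upsilon_mul_eq (p : P → ℝ) (v : P) :
    Upsilon p v * p v = nablaInvMap p v * deltaInvMap p v := by
  have hsplit : ∀ AB ∈ chainsFromMin v ×ˢ chainsToMax v, ∃ s t, AB = (s ++ [v], v :: t) := by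
    rintro ⟨A, B⟩ hAB
    obtain ⟨hA, hB⟩ := mem_product.mp hAB
    obtain ⟨s, rfl⟩ := List.getLast?_eq_some_iff.mp (mem_chainsFromMin.mp hA).2.1
    obtain ⟨t, rfl⟩ := List.head?_eq_some_iff.mp (mem_chainsToMax.mp hB).2.1
    exact ⟨s, t, rfl⟩
  rw [upsilon_eq_sum_maxChainsThrough, nablaInvMap_eq_sum_chainsFromMin,
    deltaInvMap_eq_sum_chainsToMax, sum_mul_sum, ← sum_product', sum_mul]
  symm
  refine sum_nbij (fun AB => AB.1 ++ AB.2.tail) (fun AB hAB => ?_) (fun AB hAB AB' hAB' h => ?_)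
    (fun L hL => ?_) (fun AB hAB => ?_)
  · obtain ⟨s, t, rfl⟩ := hsplit AB hAB
    simpa [append_cons_mem_maxChainsThrough] using hAB
  · obtain ⟨s, t, rfl⟩ := hsplit AB hAB
    obtain ⟨s', t', rfl⟩ := hsplit AB' hAB'
    have hnd := (mem_maxChainsThrough.mp
      (append_cons_mem_maxChainsThrough.mpr (mem_product.mp hAB))).1.nodup_of_covBy
    rw [List.nodup_middle, List.nodup_cons, List.mem_append, not_or] at hnd
    simp only [List.append_assoc, List.singleton_append, List.tail_cons] at h
    obtain ⟨rfl, -, rfl⟩ := (List.append_cons_inj_of_notMem hnd.1.1 hnd.1.2).mp h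
    rfl
  · obtain ⟨s, t, rfl⟩ := List.append_of_mem (mem_maxChainsThrough.mp hL).2.2.2
    exact ⟨(s ++ [v], v :: t), by simpa [← append_cons_mem_maxChainsThrough] using hL, by simp⟩
  · obtain ⟨s, t, rfl⟩ := hsplit AB hAB
    simp only [List.tail_cons, List.map_append, List.map_cons, List.map_nil, List.prod_append,
      List.prod_cons, List.prod_nil]
    ring

section LinearExtension

variable {α : Type*} [PartialOrder α] {l s t : List α} {v y : α}

theorem IsLinearExtension.pairwise (hl : IsLinearExtension l) : l.Pairwise fun a b => ¬b < a :=
  List.pairwise_iff_getElem.mpr fun i j hi hj hij hji => (hij.trans (hl.2.2 j i hj hi hji)).false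

theorem IsLinearExtension.notMem_right_of_le (hl : IsLinearExtension l) (h : l = s ++ v :: t)
    (hy : y ≤ v) : y ∉ t := by
  have hp := hl.pairwise
  have hnd := hl.1
  rw [h, List.pairwise_append, List.pairwise_cons] at hp
  rw [h, List.nodup_append, List.nodup_cons] at hnd
  rcases hy.eq_or_lt with rfl | hy
  · exact hnd.2.1.1
  · exact fun hyt => hp.2.1.1 y hyt hy

theorem IsLinearExtension.notMem_left_of_le (hl : IsLinearExtension l) (h : l = s ++ v :: t)
    (hy : v ≤ y) : y ∉ s := by
  have hp := hl.pairwise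
  have hnd := hl.1
  rw [h, List.pairwise_append] at hp
  rw [h, List.nodup_append] at hnd
  rcases hy.eq_or_lt with rfl | hy
  · exact fun hvs => hnd.2.2 v hvs v List.mem_cons_self rfl
  · exact fun hys => hp.2.2 y hys v List.mem_cons_self hy

theorem IsLinearExtension.mem_left_of_lt (hl : IsLinearExtension l) (h : l = s ++ v :: t)
    (hy : y < v) : y ∈ s := by
  have hyl := hl.2.1 y
  rw [h, List.mem_append, List.mem_cons] at hyl
  exact hyl.resolve_right (not_or.mpr ⟨hy.ne, hl.notMem_right_of_le h hy.le⟩)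

theorem IsLinearExtension.mem_right_of_lt (hl : IsLinearExtension l) (h : l = s ++ v :: t)
    (hy : v < y) : y ∈ t := by
  have hyl := hl.2.1 y
  rw [h, List.mem_append, List.mem_cons] at hyl
  exact (hyl.resolve_left (hl.notMem_left_of_le h hy.le)).resolve_left hy.ne'

end LinearExtension

section Folds

variable {α β : Type*} (l : List α) (F f : α → β) (step : α → (α → β) → α → β)

theorem foldr_eq_ite_mem
    (hstep : ∀ s v t, l = s ++ v :: t →
      step v (fun x => if x ∈ t then F x else f x) = fun x => if x ∈ v :: t then F x else f x) :
    l.foldr step f = fun x => if x ∈ l then F x else f x := by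
  suffices ∀ t s, l = s ++ t → t.foldr step f = fun x => if x ∈ t then F x else f x from
    this l [] rfl
  intro t
  induction t with
  | nil => intro _ _; simp
  | cons v t ih =>
    intro s h
    rw [List.foldr_cons, ih (s ++ [v]) (by simp [h]), hstep s v t h]

theorem foldl_eq_ite_mem
    (hstep : ∀ s v t, l = s ++ v :: t →
      step v (fun x => if x ∈ s then F x else f x) = fun x => if x ∈ s ++ [v] then F x else f x) :
    l.foldl (fun h v => step v h) f = fun x => if x ∈ l then F x else f x := by
  suffices ∀ t s, l = s ++ t →
      t.foldl (fun h v => step v h) (fun x => if x ∈ s then F x else f x) =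
        fun x => if x ∈ l then F x else f x by
    simpa using this l [] rfl
  intro t
  induction t with
  | nil => intro s h; simp [h]
  | cons v t ih =>
    intro s h
    rw [List.foldl_cons, hstep s v t h, ih (s ++ [v]) (by simp [h])]

end Folds

theorem upInvSum_congr {C : ℝ} {f g : P → ℝ} {x : P} (h : ∀ y, x ⋖ y → f y = g y) :
    upInvSum C f x = upInvSum C g x :=
  congrArg _ (sum_congr rfl fun y hy => by rw [h y (mem_filter.mp hy).2])

theorem upInvSum_thetaMap (C : ℝ) (q : P → ℝ) (x : P) :
    upInvSum C (thetaMap C q) x =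
      ((if IsMax x then 1 else 0) + ∑ y ∈ univ.filter (x ⋖ ·), q y) / C := by
  simp only [upInvSum, thetaMap, one_div_div, add_div, sum_div]
  split_ifs <;> simp

theorem upInvSum_thetaMap_deltaInvMap (C : ℝ) {g : P → ℝ} {x : P} (hgx : g x ≠ 0) :
    upInvSum C (thetaMap C (deltaInvMap g)) x = deltaInvMap g x / (g x * C) := by
  rw [upInvSum_thetaMap, deltaInvMap_eq_mul g x, mul_div_mul_left _ _ hgx]

theorem otog_apply_self {C : ℝ} {f h : P → ℝ} (hf : ∀ x, 0 < f x) {v : P} (hv : h v = f v)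
    (hlow : ∀ y, y ⋖ v → h y = f y)
    (hup : ∀ y, v ⋖ y → h y = thetaMap C (deltaInvMap (nablaMap f)) y) :
    otog C v h v = thetaMap C (deltaInvMap (nablaMap f)) v := by
  have hg := nablaMap_pos hf
  have hgv : nablaMap f v = f v / lowSum f v := rfl
  have hfv := (hf v).ne'
  have hL := (lowSum_pos hf v).ne'
  rw [otog, if_pos rfl, hv, lowSum_congr hlow, upInvSum_congr hup,
    upInvSum_thetaMap_deltaInvMap C (hg v).ne', thetaMap, hgv]
  field_simp

theorem foldr_otog_eq_thetaMap_deltaInvMap {C : ℝ} {f : P → ℝ} (hf : ∀ x, 0 < f x)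
    {l : List P} (hl : IsLinearExtension l) :
    l.foldr (fun v h => otog C v h) f = thetaMap C (deltaInvMap (nablaMap f)) := by
  rw [foldr_eq_ite_mem l (thetaMap C (deltaInvMap (nablaMap f))) f _ fun s v t h => ?_]
  · funext x
    simp [hl.2.1 x]
  funext x
  by_cases hx : x = v
  · subst hx
    rw [if_pos List.mem_cons_self]
    exact otog_apply_self hf (if_neg (hl.notMem_right_of_le h le_rfl))
      (fun y hy => if_neg (hl.notMem_right_of_le h hy.le))
      fun y hy => if_pos (hl.mem_right_of_lt h hy.lt)
  · simp [otog, hx]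

theorem upsilon_eq_lowSum_mul_deltaInvMap {g F h : P → ℝ} {v : P} (hgv : g v ≠ 0)
    (hF : ∀ x, 0 < F x) (hlt : ∀ y, y < v → h y = nablaMap F y)
    (hge : ∀ y, v ≤ y → h y = g y) :
    Upsilon h v = lowSum F v * deltaInvMap g v := by
  have hU : nablaInvMap h v = g v * lowSum F v := by
    rw [nablaInvMap_eq_mul_lowSum, hge v le_rfl]
    refine congrArg _ (lowSum_congr fun y hy => ?_)
    rw [nablaInvMap_congr fun z hz => hlt z (hz.trans_lt hy.lt), nablaInvMap_nablaMap hF]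
  refine mul_right_cancel₀ hgv ?_
  rw [← hge v le_rfl, upsilon_mul_eq, hU, deltaInvMap_congr hge, hge v le_rfl]
  ring

theorem applyATogs_eq_nablaMap_thetaMap_deltaInvMap {C : ℝ} (hC : 0 < C) {g : P → ℝ}
    (hg : ∀ x, 0 < g x) {l : List P} (hl : IsLinearExtension l) :
    applyATogs C l g = nablaMap (thetaMap C (deltaInvMap g)) := by
  have hF : ∀ x, 0 < thetaMap C (deltaInvMap g) x := fun x => div_pos hC (deltaInvMap_pos hg x)
  rw [applyATogs, foldl_eq_ite_mem l (nablaMap (thetaMap C (deltaInvMap g))) g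
    (fun v h => atog C v h) fun s v t h => ?_]
  · funext x
    simp [hl.2.1 x]
  funext x
  by_cases hx : x = v
  · subst hx
    rw [if_pos (List.mem_append_right s (List.mem_singleton_self x)), atog, if_pos rfl,
      upsilon_eq_lowSum_mul_deltaInvMap (hg x).ne' hF (fun y hy => if_pos (hl.mem_left_of_lt h hy))
        fun y hy => if_neg (hl.notMem_left_of_le h hy), nablaMap, thetaMap, div_div, mul_comm]
  · simp [atog, hx]

/-- Birational antichain rowmotion and birational order rowmotion are
intertwined by the down transfer: `∇ ∘ BOR = BAR ∘ ∇` on positive labelings, where for a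
linear extension `(x₁,…,xₙ)` of `P`, `BOR = T_{x₁} ∘ T_{x₂} ∘ ⋯ ∘ T_{xₙ}` (rightmost
applied first, toggling from top to bottom) and `BAR = τ_{xₙ} ∘ ⋯ ∘ τ_{x₂} ∘ τ_{x₁}`
(toggling from bottom to top). -/
theorem nabla_BOR_eq_BAR_nabla (C : ℝ) (hC : 0 < C)
    (l : List P) (hl : IsLinearExtension l)
    (f : P → ℝ) (hf : ∀ x, 0 < f x) :
    nablaMap (l.foldr (fun v h => otog C v h) f) = applyATogs C l (nablaMap f) := by
  rw [foldr_otog_eq_thetaMap_deltaInvMap hf hl,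
    applyATogs_eq_nablaMap_thetaMap_deltaInvMap hC (nablaMap_pos hf) hl]
end

section
/- Let P be a finite graded poset of rank r, let g be a positive labeling of P, let a₀, …, a_r be positive reals, and let 0 ≤ i ≤ r. Then ρτ_i((a₀,…,a_r) ♭ g) = (a₀, …, a_{i-1}, 1/(a₀a₁⋯a_r), a_{i+1}, …, a_r) ♭ ρτ_i(g); that is, applying the antichain rank toggle ρτ_i to the graded rescaling of g by (a₀,…,a_r) yields the graded rescaling of ρτ_i(g) by the vector obtained from (a₀,…,a_r) by replacing its i-th entry with 1/(a₀a₁⋯a_r). -/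
/-!
Birational (commutative) antichain/order rowmotion on a finite poset `P`, with labels in `ℝ`
and positive labelings, following Joseph–Roby, "Birational and noncommutative lifts of
antichain toggling and rowmotion".
-/

open Finset

attribute [local instance] Classical.propDecidable

variable {P : Type*} [Fintype P] [PartialOrder P]

/-!
In a graded poset of rank `r` a maximal chain meets every rank exactly once, so a graded
rescaling multiplies each chain product, hence each `Υ_v`, by `a₀a₁⋯a_r`, and `τ_v` turns this
into the factor `(a₀a₁⋯a_r)⁻¹` at `v`. A maximal chain through a rank-`i` element `v` meets
rank `i` only at `v`, so the factors already placed at the other rank-`i` elements do not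
affect the later toggles of `ρτ_i`.
-/

namespace IsRankFunction

lemma rk_satChain_of_isMin {P : Type*} [PartialOrder P] {rk : P → ℕ} {r : ℕ}
    (hrk : IsRankFunction rk r) {k : ℕ} {c : Fin (k + 1) → P} (hc : SatChain c)
    (h0 : IsMin (c 0)) (j : Fin (k + 1)) : rk (c j) = j := by
  induction j using Fin.induction with
  | zero => exact hrk.1 _ h0
  | succ j ih => simp [hrk.2.1 _ _ (hc j), ih]

lemma length_eq_of_maxChain {P : Type*} [PartialOrder P] {rk : P → ℕ} {r : ℕ}
    (hrk : IsRankFunction rk r) {k : ℕ} {c : Fin (k + 1) → P} (hc : MaxChain c) : k = r := by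
  simpa [rk_satChain_of_isMin hrk hc.1 hc.2.1] using hrk.2.2 _ hc.2.2

lemma prod_maxChain_mul {P : Type*} [PartialOrder P] {rk : P → ℕ} {r : ℕ}
    (hrk : IsRankFunction rk r) {a : ℕ → ℝ} {b : P → ℝ} {v : P}
    (hb : ∀ x, rk x ≠ rk v → b x = a (rk x)) (hbv : b v = a (rk v)) (h : P → ℝ) {k : ℕ}
    {c : Fin (k + 1) → P} (hc : MaxChain c) (hvc : ∃ j, c j = v) :
    (List.ofFn ((b * h) ∘ c)).prod
      = (∏ j ∈ range (r + 1), a j) * (List.ofFn (h ∘ c)).prod := by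
  obtain ⟨j₀, rfl⟩ := hvc
  have hrkc := rk_satChain_of_isMin hrk hc.1 hc.2.1
  have hbc : ∀ j, b (c j) = a j := fun j => by
    by_cases hj : rk (c j) = rk (c j₀)
    · have : j = j₀ := Fin.ext (by simpa [hrkc] using hj)
      rw [this, hbv, hrkc]
    · rw [hb _ hj, hrkc]
  obtain rfl := length_eq_of_maxChain hrk hc
  simp only [List.prod_ofFn, Function.comp_apply, Pi.mul_apply, prod_mul_distrib, hbc,
    Fin.prod_univ_eq_prod_range (fun j => a j)]

lemma upsilon_mul {rk : P → ℕ} {r : ℕ} (hrk : IsRankFunction rk r)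
    {a : ℕ → ℝ} {b : P → ℝ} {v : P}
    (hb : ∀ x, rk x ≠ rk v → b x = a (rk x)) (hbv : b v = a (rk v)) (h : P → ℝ) :
    Upsilon (b * h) v = (∏ j ∈ range (r + 1), a j) * Upsilon h v := by
  simp only [Upsilon, mul_sum]
  refine sum_congr rfl fun k _ => sum_congr rfl fun c hc => ?_
  obtain ⟨hmax, hvc⟩ := (mem_filter.mp hc).2
  exact prod_maxChain_mul hrk hb hbv h hmax hvc

lemma atog_mul {rk : P → ℕ} {r : ℕ} (hrk : IsRankFunction rk r) (C : ℝ)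
    {a : ℕ → ℝ} {b : P → ℝ} {v : P}
    (hb : ∀ x, rk x ≠ rk v → b x = a (rk x)) (hbv : b v = a (rk v)) (h : P → ℝ) :
    atog C v (b * h) = Function.update b v (∏ j ∈ range (r + 1), a j)⁻¹ * atog C v h := by
  funext x
  by_cases hx : x = v
  · subst hx
    simp only [atog, Pi.mul_apply, if_pos, Function.update_self, upsilon_mul hrk hb hbv h]
    rw [div_mul_eq_div_div_swap, div_eq_inv_mul]
  · simp [atog, hx]

lemma applyATogs_mul {rk : P → ℕ} {r : ℕ} (hrk : IsRankFunction rk r) (C : ℝ)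
    {a : ℕ → ℝ} {i : ℕ} (l : List P) (hl : l.Nodup) (hli : ∀ x ∈ l, rk x = i)
    {b : P → ℝ} (hb : ∀ x, rk x ≠ i ∨ x ∈ l → b x = a (rk x)) (h : P → ℝ) :
    applyATogs C l (b * h)
      = (fun x => if x ∈ l then (∏ j ∈ range (r + 1), a j)⁻¹ else b x)
          * applyATogs C l h := by
  induction l generalizing b h with
  | nil => simp [applyATogs]
  | cons v t ih =>
    obtain ⟨hvt, ht⟩ := List.nodup_cons.mp hl
    have hv : rk v = i := hli v List.mem_cons_self
    have htoggle := atog_mul hrk C (a := a) (b := b) (v := v)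
      (fun x hx => hb x (.inl (hv ▸ hx))) (hb v (.inr List.mem_cons_self)) h
    change applyATogs C t (atog C v (b * h)) = _ * applyATogs C t (atog C v h)
    rw [htoggle, ih ht (fun x hx => hli x (List.mem_cons_of_mem v hx))]
    · funext x
      by_cases hxv : x = v <;> simp [hxv]
    · rintro x hx
      have hxv : x ≠ v := by rintro rfl; exact hx.elim (· hv) hvt
      rw [Function.update_of_ne hxv]
      exact hb x (hx.imp_right (List.mem_cons_of_mem v))

end IsRankFunction

theorem rank_atog_graded_rescaling_general (C : ℝ)
    (rk : P → ℕ) (r : ℕ) (hrk : IsRankFunction rk r)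
    (i : ℕ)
    (li : List P) (hli : li.Nodup ∧ ∀ x : P, x ∈ li ↔ rk x = i)
    (a : ℕ → ℝ)
    (g : P → ℝ) :
    applyATogs C li (fun x => a (rk x) * g x)
      = fun x =>
          (if rk x = i then (∏ j ∈ range (r + 1), a j)⁻¹ else a (rk x))
            * applyATogs C li g x := by
  have hscale := hrk.applyATogs_mul C li hli.1 (fun x hx => (hli.2 x).mp hx)
    (b := fun x => a (rk x)) (fun _ _ => rfl) g
  simp only [hli.2] at hscale
  exact hscale

/-- Let `P` be a finite graded poset of rank `r`, `g` a positive
labeling, `a₀,…,a_r` positive reals and `0 ≤ i ≤ r`.  Then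
`ρτ_i((a₀,…,a_r) ♭ g) = (a₀,…,a_{i-1}, 1/(a₀a₁⋯a_r), a_{i+1},…,a_r) ♭ ρτ_i(g)`,
where `(a₀,…,a_r) ♭ g` multiplies the label of each element of rank `j` by `a_j`, and
`ρτ_i` is the product of the (commuting) antichain toggles at the rank-`i` elements,
realized along a list `li` of the rank-`i` elements. -/
theorem rank_atog_graded_rescaling (C : ℝ) (hC : 0 < C)
    (rk : P → ℕ) (r : ℕ) (hrk : IsRankFunction rk r)
    (i : ℕ) (hi : i ≤ r)
    (li : List P) (hli : li.Nodup ∧ ∀ x : P, x ∈ li ↔ rk x = i)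
    (a : ℕ → ℝ) (ha : ∀ j, 0 < a j)
    (g : P → ℝ) (hg : ∀ x, 0 < g x) :
    applyATogs C li (fun x => a (rk x) * g x)
      = fun x =>
          (if rk x = i then (∏ j ∈ range (r + 1), a j)⁻¹ else a (rk x))
            * applyATogs C li g x :=
  rank_atog_graded_rescaling_general C rk r hrk i li hli a g
end
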